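/- For a function f which is C^2 in a neighborhood of 0 in the complex plane, the Laplacian of f at 0 equals the limit as r → 0 of (4/r^2) · ( (1/2π) ∫_{θ=0}^{2π} f(r e^{iθ}) dθ − f(0) ). -/

import Mathlib

open MeasureTheory Real Filter Complex

/-- The Laplacian of `f : ℂ → ℝ` at `0`: second derivatives in the directions `1` and `I`. -/
noncomputable def laplacianAtZero (f : ℂ → ℝ) : ℝ :=
  iteratedFDeriv ℝ 2 f 0 ![(1 : ℂ), 1] + iteratedFDeriv ℝ 2 f 0 ![Complex.I, Complex.I]

open Asymptotics Metric Topology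

/-! The second-order Taylor expansion `f z = f 0 + L z + B(z, z)/2 + o(‖z‖²)` (the remainder is
controlled by the mean value inequality) reduces the circle mean to the means of a linear and a
quadratic form. The linear part averages to `0` by the rotation `z ↦ -z`. For the symmetric
bilinear `B`, the rotation `z ↦ I z` gives `B(z, z) + B(I z, I z) = ‖z‖² (B(1, 1) + B(I, I))`, so
`B(z, z)` has mean `r² / 2 · Δf(0)` on the circle of radius `r`. -/

section Taylor

variable {E F : Type*} [NormedAddCommGroup E] [NormedSpace ℝ E] [NormedAddCommGroup F]
  [NormedSpace ℝ F]

theorem hasFDerivAt_half_apply_self {B : E →L[ℝ] E →L[ℝ] F} (hB : ∀ v w, B v w = B w v)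
    (x : E) : HasFDerivAt (fun y => (2 : ℝ)⁻¹ • B y y) (B x) x := by
  refine ((B.hasFDerivAt.clm_apply (hasFDerivAt_id x)).const_smul (2 : ℝ)⁻¹).congr_fderiv ?_
  ext v
  simp only [ContinuousLinearMap.comp_id, id_eq, smul_add, add_apply, smul_apply,
    ContinuousLinearMap.flip_apply, hB v x]
  module

theorem isLittleO_taylor_two {f : E → F} {f' : E → E →L[ℝ] F} {B : E →L[ℝ] E →L[ℝ] F} {x : E}
    (hf : ∀ᶠ y in 𝓝 x, HasFDerivAt f (f' y) y) (hB : HasFDerivAt f' B x) :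
    (fun h => f (x + h) - f x - f' x h - (2 : ℝ)⁻¹ • B h h) =o[𝓝 0] fun h => ‖h‖ ^ 2 := by
  have hsymm := second_derivative_symmetric_of_eventually hf hB
  refine isLittleO_iff.2 fun ε hε => ?_
  have hf_shift : ∀ᶠ h in 𝓝 (0 : E), HasFDerivAt f (f' (x + h)) (x + h) := by
    have : Tendsto (x + ·) (𝓝 0) (𝓝 x) := by
      simpa using (continuous_const_add x).tendsto (0 : E)
    exact this.eventually hf
  obtain ⟨δ, hδ, hball⟩ := eventually_nhds_iff_ball.1
    (hf_shift.and (isLittleO_iff.1 (hasFDerivAt_iff_isLittleO_nhds_zero.1 hB) hε))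
  filter_upwards [ball_mem_nhds 0 hδ] with h hh
  have hsub : closedBall (0 : E) ‖h‖ ⊆ ball 0 δ := closedBall_subset_ball (by simpa using hh)
  have hderiv : ∀ k ∈ closedBall (0 : E) ‖h‖,
      HasFDerivWithinAt (fun h => f (x + h) - f x - f' x h - (2 : ℝ)⁻¹ • B h h)
        (f' (x + k) - f' x - B k) (closedBall 0 ‖h‖) k := fun k hk =>
    (((((hball k (hsub hk)).1.comp k ((hasFDerivAt_id k).const_add x)).sub_const _).sub
      (f' x).hasFDerivAt).sub (hasFDerivAt_half_apply_self hsymm k)).hasFDerivWithinAt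
  have hbound : ∀ k ∈ closedBall (0 : E) ‖h‖, ‖f' (x + k) - f' x - B k‖ ≤ ε * ‖h‖ := by
    intro k hk
    calc ‖f' (x + k) - f' x - B k‖ ≤ ε * ‖k‖ := (hball k (hsub hk)).2
      _ ≤ ε * ‖h‖ := by gcongr; simpa using hk
  have := (convex_closedBall (0 : E) ‖h‖).norm_image_sub_le_of_norm_hasFDerivWithin_le hderiv
    hbound (mem_closedBall_self (norm_nonneg h)) (y := h) (by simp)
  simpa [sq, mul_assoc] using this

end Taylor

section CircleAverage

variable {E : Type*} [NormedAddCommGroup E] [NormedSpace ℝ E]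

theorem norm_circleAverage_le {f : ℂ → E} {c : ℂ} {R C : ℝ}
    (h : ∀ z ∈ sphere c |R|, ‖f z‖ ≤ C) : ‖circleAverage f c R‖ ≤ C := by
  have hint := intervalIntegral.norm_integral_le_of_norm_le_const (a := 0) (b := 2 * π)
    fun θ _ => h (circleMap c R θ) (circleMap_mem_sphere' c R θ)
  rw [circleAverage, norm_smul, norm_inv, Real.norm_of_nonneg two_pi_pos.le]
  rw [sub_zero, abs_of_pos two_pi_pos] at hint
  calc (2 * π)⁻¹ * ‖∫ θ in 0..2 * π, f (circleMap c R θ)‖ ≤ (2 * π)⁻¹ * (C * (2 * π)) := by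
        gcongr
    _ = C := by field_simp

theorem circleAverage_comp_exp_mul (f : ℂ → E) (η R : ℝ) :
    circleAverage (fun z => f (exp (η * I) * z)) 0 R = circleAverage f 0 R := by
  rw [circleAverage_eq_integral_add η (f := f), circleAverage]
  congr 2 with θ
  simp only [circleMap_zero, ofReal_add, add_mul, Complex.exp_add]
  ring_nf

theorem circleAverage_continuousLinearMap (L : ℂ →L[ℝ] E) (R : ℝ) :
    circleAverage L 0 R = 0 := by
  have h := circleAverage_comp_exp_mul L π R
  simp only [exp_pi_mul_I, neg_one_mul, map_neg] at h
  rw [show (fun z => -L z) = fun z => (-1 : ℝ) • L z by simp, circleAverage_fun_smul,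
    neg_one_smul] at h
  have h2 : (2 : ℝ) • circleAverage L 0 R = 0 := by
    rw [two_smul]
    nth_rewrite 1 [← h]
    exact neg_add_cancel _
  simpa using h2

theorem apply_self_add_apply_I_mul_self {B : ℂ →L[ℝ] ℂ →L[ℝ] E} (hB : ∀ v w, B v w = B w v)
    (z : ℂ) : B z z + B (I * z) (I * z) = ‖z‖ ^ 2 • (B 1 1 + B I I) := by
  obtain ⟨a, b, rfl⟩ : ∃ a b : ℝ, z = a • (1 : ℂ) + b • I :=
    ⟨z.re, z.im, by simp [Complex.real_smul, re_add_im]⟩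
  have hIz : I * (a • (1 : ℂ) + b • I) = a • I - b • (1 : ℂ) := by
    apply Complex.ext <;> simp
  have hnorm : ‖a • (1 : ℂ) + b • I‖ ^ 2 = a ^ 2 + b ^ 2 := by
    rw [Complex.sq_norm, normSq_apply]
    simp [sq]
  rw [hIz, hnorm]
  simp only [map_add, map_sub, map_smul, add_apply, sub_apply, smul_apply, hB I 1]
  module

theorem circleAverage_apply_self [CompleteSpace E] {B : ℂ →L[ℝ] ℂ →L[ℝ] E}
    (hB : ∀ v w, B v w = B w v) (R : ℝ) :
    circleAverage (fun z => B z z) 0 R = (R ^ 2 / 2) • (B 1 1 + B I I) := by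
  have hcont : Continuous fun z => B z z := by fun_prop
  have hrot := circleAverage_comp_exp_mul (fun z => B z z) (π / 2) R
  rw [ofReal_div, ofReal_ofNat, exp_pi_div_two_mul_I] at hrot
  have hsum : circleAverage (fun z => B z z + B (I * z) (I * z)) 0 R =
      R ^ 2 • (B 1 1 + B I I) := by
    refine circleAverage_const_on_circle fun z hz => ?_
    rw [apply_self_add_apply_I_mul_self hB, mem_sphere_zero_iff_norm.1 hz, sq_abs]
  rw [circleAverage_fun_add hcont.continuousOn.circleIntegrable'
    (by fun_prop : Continuous fun z => B (I * z) (I * z)).continuousOn.circleIntegrable', hrot,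
    ← two_smul ℝ] at hsum
  rw [div_eq_inv_mul, mul_smul, ← hsum, smul_smul]
  norm_num

theorem isLittleO_circleAverage {g : ℂ → E} (hg : g =o[𝓝 0] fun z => ‖z‖ ^ 2) :
    (fun R : ℝ => circleAverage g 0 R) =o[𝓝 0] fun R => R ^ 2 := by
  refine isLittleO_iff.2 fun ε hε => ?_
  obtain ⟨δ, hδ, hball⟩ := eventually_nhds_iff_ball.1 (isLittleO_iff.1 hg hε)
  filter_upwards [ball_mem_nhds 0 hδ] with R hR
  refine norm_circleAverage_le fun z hz => ?_
  have hz' : ‖z‖ = |R| := mem_sphere_zero_iff_norm.1 hz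
  simpa [hz'] using hball z (by simpa [hz'] using hR)

end CircleAverage

theorem isLittleO_circleAverage_sub_laplacian {E : Type*} [NormedAddCommGroup E]
    [NormedSpace ℝ E] [CompleteSpace E] {f : ℂ → E} {f' : ℂ → ℂ →L[ℝ] E}
    {B : ℂ →L[ℝ] ℂ →L[ℝ] E} (hf : ∀ᶠ z in 𝓝 0, HasFDerivAt f (f' z) z)
    (hB : HasFDerivAt f' B 0) :
    (fun R : ℝ => circleAverage f 0 R - f 0 - (R ^ 2 / 4) • (B 1 1 + B I I)) =o[𝓝 0]
      fun R => R ^ 2 := by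
  have hsymm := second_derivative_symmetric_of_eventually hf hB
  have htaylor : (fun z => f z - f 0 - f' 0 z - (2 : ℝ)⁻¹ • B z z) =o[𝓝 0]
      fun z => ‖z‖ ^ 2 := by
    simpa using isLittleO_taylor_two hf hB
  refine (isLittleO_circleAverage htaylor).congr' ?_ EventuallyEq.rfl
  obtain ⟨δ, hδ, hball⟩ := eventually_nhds_iff_ball.1 hf
  filter_upwards [ball_mem_nhds (0 : ℝ) hδ] with R hR
  have hsphere : sphere (0 : ℂ) |R| ⊆ ball 0 δ :=
    sphere_subset_ball (by simpa using hR)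
  have hfc : ContinuousOn f (sphere 0 |R|) := fun z hz =>
    (hball z (hsphere hz)).continuousAt.continuousWithinAt
  rw [circleAverage_fun_sub (by fun_prop) (by fun_prop),
    circleAverage_fun_sub (by fun_prop) (by fun_prop),
    circleAverage_fun_sub (by fun_prop) (by fun_prop), circleAverage_const,
    circleAverage_continuousLinearMap, circleAverage_fun_smul, circleAverage_apply_self hsymm,
    sub_zero, smul_smul]
  ring_nf

theorem stmt_0 (f : ℂ → ℝ) (U : Set ℂ) (hU : IsOpen U) (h0 : (0 : ℂ) ∈ U)
    (hf : ContDiffOn ℝ 2 f U) :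
    Tendsto
      (fun r : ℝ => 4 / r ^ 2 *
        ((1 / (2 * π)) * (∫ θ in (0:ℝ)..(2 * π), f ((r : ℂ) * Complex.exp (θ * Complex.I)))
          - f 0))
      (nhdsWithin 0 (Set.Ioi 0)) (nhds (laplacianAtZero f)) := by
  have hfd : ∀ᶠ z in 𝓝 0, HasFDerivAt f (fderiv ℝ f z) z := by
    filter_upwards [hU.mem_nhds h0] with z hz
    exact ((hf.contDiffAt (hU.mem_nhds hz)).differentiableAt two_ne_zero).hasFDerivAt
  have hB : HasFDerivAt (fderiv ℝ f) (fderiv ℝ (fderiv ℝ f) 0) 0 :=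
    (((hf.contDiffAt (hU.mem_nhds h0)).fderiv_right le_rfl).differentiableAt
      one_ne_zero).hasFDerivAt
  have hlap : laplacianAtZero f =
      fderiv ℝ (fderiv ℝ f) 0 1 1 + fderiv ℝ (fderiv ℝ f) 0 I I := by
    simp [laplacianAtZero, iteratedFDeriv_two_apply]
  have hmean : ∀ r : ℝ, (1 / (2 * π)) * (∫ θ in (0:ℝ)..(2 * π), f (r * exp (θ * I))) =
      circleAverage f 0 r := fun r => by
    simp [circleAverage, circleMap_zero]
  have hlim := ((isLittleO_circleAverage_sub_laplacian hfd hB).tendsto_div_nhds_zero.const_mul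
    4).const_add (laplacianAtZero f)
  rw [mul_zero, add_zero] at hlim
  refine (hlim.mono_left nhdsWithin_le_nhds).congr' ?_
  filter_upwards [self_mem_nhdsWithin] with r (hr : 0 < r)
  rw [hmean, hlap]
  field_simp
  ring
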